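/- Let T be an observation table and M a transducer compatible with T. Then the pair (≡,f) induced by M on P_T satisfies all six conditions of a merging map, i.e., the induced pair is a merging map on T. -/

import Mathlib

attribute [local instance] Classical.propDecidable

/-- A subsequential string transducer with input alphabet `σ` and output alphabet `γ`. -/
structure Transducer (σ : Type) (γ : Type) : Type 1 where
  Q : Type
  fin : Finite Q
  q0 : Q
  w0 : List γ
  δ : Q → σ → Option (Q × List γ)
  δF : Q → Option (List γ)

namespace Transducer

variable {σ γ : Type}

/-- The run relation `q →*^{u|w} q'`, as a function: from state `q`, reading `u`,
we reach the returned state producing the returned (concatenated) output. -/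
def runFrom (M : Transducer σ γ) : M.Q → List σ → Option (M.Q × List γ)
  | q, [] => some (q, [])
  | q, a :: u =>
    (M.δ q a).bind fun x =>
      (M.runFrom x.1 u).map fun y => (y.1, x.2 ++ y.2)

/-- The semantics `⟦M⟧` of a transducer, as a partial function `Σ* → Γ*`. -/
def sem (M : Transducer σ γ) (u : List σ) : Option (List γ) :=
  (M.runFrom M.q0 u).bind fun x => (M.δF x.1).map fun w' => M.w0 ++ x.2 ++ w'

/-- The number of states `|M|` of a transducer. -/
noncomputable def size (M : Transducer σ γ) : ℕ := Nat.card M.Q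

/-- The run of `v` in `M` (from the initial state) uses the transition out of
state `q` reading letter `a`. -/
def usesTransition (M : Transducer σ γ) (q : M.Q) (a : σ) (v : List σ) : Prop :=
  ∃ (vp vs : List σ) (w : List γ), v = vp ++ a :: vs ∧ M.runFrom M.q0 vp = some (q, w)

/-- Modify the transition function of `M` at `(q, a)`: replace it by `o`
(`o = none` deletes the transition, `o = some (q', w)` makes it `q →^{a|w} q'`). -/
noncomputable def modifyDelta (M : Transducer σ γ) (q : M.Q) (a : σ)
    (o : Option (M.Q × List γ)) : Transducer σ γ :=
  { M with δ := fun p b => if p = q ∧ b = a then o else M.δ p b }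

/-- The product transducer `M × A` of a transducer and a DFA. -/
noncomputable def prodDFA {Q : Type} [Finite Q] (M : Transducer σ γ) (A : DFA σ Q) :
    Transducer σ γ where
  Q := M.Q × Q
  fin := by have := M.fin; infer_instance
  q0 := (M.q0, A.start)
  w0 := M.w0
  δ := fun qp a => (M.δ qp.1 a).map fun x => ((x.1, A.step qp.2 a), x.2)
  δF := fun qp => if qp.2 ∈ A.accept then M.δF qp.1 else none

end Transducer

/-- A table entry: a word of `Γ*`, the wildcard `#`, or `⊥`. -/
inductive TVal (γ : Type) : Type where
  | word : List γ → TVal γ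
  | hash : TVal γ
  | bot  : TVal γ

/-- An observation table for a target partial function `τ` with regular domain
upper bound `Up`, based on a finite prefix-closed set `P` and a finite
suffix-closed set `S` (both containing `ε`). -/
structure ObsTable (σ γ : Type) where
  P : Finset (List σ)
  S : Finset (List σ)
  eps_mem_P : ([] : List σ) ∈ P
  eps_mem_S : ([] : List σ) ∈ S
  prefixClosed : ∀ u ∈ P, ∀ v : List σ, v <+: u → v ∈ P
  suffixClosed : ∀ u ∈ S, ∀ v : List σ, v <:+ u → v ∈ S
  Up : Language σ
  regular : ∃ (n : ℕ) (A : DFA σ (Fin n)), A.accepts = Up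
  τ : List σ → Option (List γ)
  dom_subset : ∀ u : List σ, (τ u).isSome → u ∈ Up

namespace ObsTable

variable {σ γ : Type}

/-- The set `P ∪ PΣ`. -/
def rowIdx (T : ObsTable σ γ) : Set (List σ) :=
  ↑T.P ∪ {x | ∃ p ∈ T.P, ∃ a : σ, x = p ++ [a]}

/-- The set `(P ∪ PΣ)·S` on which the table is defined. -/
def rows (T : ObsTable σ γ) : Set (List σ) :=
  {x | ∃ u ∈ T.rowIdx, ∃ v ∈ T.S, x = u ++ v}

/-- The table entry at `x`: `#` if `x ∉ Up`, `⊥` if `x ∈ Up ∖ dom τ`, and `τ x` otherwise. -/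
noncomputable def val (T : ObsTable σ γ) (x : List σ) : TVal γ :=
  if x ∈ T.Up then
    match T.τ x with
    | some w => TVal.word w
    | none => TVal.bot
  else TVal.hash

/-- `P_T`: the set of prefixes of elements of `(P ∪ PΣ)·S`. -/
def PT (T : ObsTable σ γ) : Set (List σ) := {u | ∃ x ∈ T.rows, u <+: x}

/-- `P_Γ`: those `u ∈ P_T` having an extension whose table entry is a word of `Γ*`. -/
def PGamma (T : ObsTable σ γ) : Set (List σ) :=
  {u | u ∈ T.PT ∧ ∃ v : List σ, u ++ v ∈ T.rows ∧ ∃ w, T.val (u ++ v) = TVal.word w}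

/-- A transducer `M` is compatible with the table `T`. -/
def Compatible (T : ObsTable σ γ) (M : Transducer σ γ) : Prop :=
  ∀ x ∈ T.rows,
    (∀ w, T.val x = TVal.word w → M.sem x = some w) ∧
    (T.val x = TVal.bot → M.sem x = none)

lemma rowIdx_finite [Finite σ] (T : ObsTable σ γ) : T.rowIdx.Finite := by
  refine Set.Finite.union T.P.finite_toSet ?_
  have h : {x : List σ | ∃ p ∈ T.P, ∃ a : σ, x = p ++ [a]}
      ⊆ (fun pa : List σ × σ => pa.1 ++ [pa.2]) '' ((↑T.P : Set (List σ)) ×ˢ (Set.univ : Set σ)) := by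
    rintro x ⟨p, hp, a, rfl⟩
    exact ⟨(p, a), ⟨hp, trivial⟩, rfl⟩
  exact ((T.P.finite_toSet.prod Set.finite_univ).image _).subset h

lemma rows_finite [Finite σ] (T : ObsTable σ γ) : T.rows.Finite := by
  have h : T.rows ⊆ (fun uv : List σ × List σ => uv.1 ++ uv.2) '' (T.rowIdx ×ˢ (↑T.S : Set (List σ))) := by
    rintro x ⟨u, hu, v, hv, rfl⟩
    exact ⟨(u, v), ⟨hu, hv⟩, rfl⟩
  exact (((rowIdx_finite T).prod T.S.finite_toSet).image _).subset h

lemma PT_finite [Finite σ] (T : ObsTable σ γ) : T.PT.Finite := by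
  have h : T.PT ⊆ ⋃ x ∈ T.rows, {u : List σ | u ∈ x.inits} := by
    rintro u ⟨x, hx, hpre⟩
    exact Set.mem_biUnion hx (by simpa [List.mem_inits] using hpre)
  refine (Set.Finite.biUnion (rows_finite T) fun x _ => ?_).subset h
  exact x.inits.finite_toSet

end ObsTable

/-- A merging map `(≡, f)` on an observation table `T`. -/
structure MergingMap {σ γ : Type} (T : ObsTable σ γ) where
  rel : List σ → List σ → Prop
  f : List σ → Option (List γ)
  rel_mem : ∀ u v : List σ, rel u v → u ∈ T.PT ∧ v ∈ T.PT
  rel_refl : ∀ u ∈ T.PT, rel u u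
  rel_symm : ∀ {u v : List σ}, rel u v → rel v u
  rel_trans : ∀ {u v w : List σ}, rel u v → rel v w → rel u w
  f_mem : ∀ u : List σ, (f u).isSome → u ∈ T.PT
  cond1 : ∀ u v : List σ, f u = none → rel u v → f v = none
  cond2 : ∀ (u v : List σ) (w : List γ), u ∈ T.PT → u ++ v ∈ T.rows →
    T.val (u ++ v) = TVal.word w → ∃ x, f u = some x ∧ x <+: w
  cond3 : ∀ (u : List σ) (a : σ) (w : List γ), f (u ++ [a]) = some w →
    ∃ x, f u = some x ∧ x <+: w
  cond4 : ∀ (u u' : List σ) (a : σ) (wu : List γ), f u = some wu → rel u u' →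
    u ++ [a] ∈ T.PT → u' ++ [a] ∈ T.PT →
    rel (u ++ [a]) (u' ++ [a]) ∧
    ∀ wua, f (u ++ [a]) = some wua →
      ∃ (wu' x : List γ), f u' = some wu' ∧ wua = wu ++ x ∧ f (u' ++ [a]) = some (wu' ++ x)
  cond5 : ∀ (u u' : List σ) (w : List γ), u ∈ T.rows → T.val u = TVal.word w → rel u u' →
    (u' ∈ T.rows → T.val u' ≠ TVal.bot) ∧
    ∀ w', u' ∈ T.rows → T.val u' = TVal.word w' →
      ∃ (x fu fu' : List γ), f u = some fu ∧ f u' = some fu' ∧ w = fu ++ x ∧ w' = fu' ++ x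
  cond6 : ∀ (u : List σ) (a : σ), (f (u ++ [a])).isSome →
    (¬ ∃ v, rel u v ∧ v ++ [a] ∈ T.PGamma) → f (u ++ [a]) = f u

namespace MergingMap

variable {σ γ : Type} {T : ObsTable σ γ}

/-- The `≡`-class of `u`. -/
def cls (m : MergingMap T) (u : List σ) : Set (List σ) := {v | m.rel u v}

/-- The set of `≡`-classes meeting `dom f`. -/
def classes (m : MergingMap T) : Set (Set (List σ)) :=
  {C | ∃ u : List σ, (m.f u).isSome ∧ C = m.cls u}

/-- The size of a merging map: the number of `≡`-classes meeting `dom f`. -/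
noncomputable def size (m : MergingMap T) : ℕ := m.classes.ncard

lemma cls_mem_classes (m : MergingMap T) {u : List σ} (h : (m.f u).isSome) :
    m.cls u ∈ m.classes := ⟨u, h, rfl⟩

lemma classes_finite [Finite σ] (m : MergingMap T) : m.classes.Finite := by
  have h : m.classes ⊆ m.cls '' T.PT := by
    rintro C ⟨u, hu, rfl⟩
    exact ⟨u, m.f_mem u hu, rfl⟩
  exact ((T.PT_finite).image _).subset h

/-- A muted pair `(u, a)` of a merging map. -/
def Muted (m : MergingMap T) (u : List σ) (a : σ) : Prop :=
  (m.f u).isSome ∧ (m.f (u ++ [a])).isSome ∧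
    ¬ ∃ v, m.rel u v ∧ v ++ [a] ∈ T.PGamma

/-- An open end `(u, a)` of a merging map. -/
def OpenEnd (m : MergingMap T) (u : List σ) (a : σ) : Prop :=
  u ∈ T.PT ∧ ¬ ∃ v, m.rel u v ∧ v ++ [a] ∈ T.PT

/-- The transducer resulting from a merging map (assuming `f ε` is defined,
so that the initial state exists). -/
noncomputable def resulting [Finite σ] (m : MergingMap T) (h0 : (m.f []).isSome) :
    Transducer σ γ where
  Q := {C : Set (List σ) // C ∈ m.classes}
  fin := m.classes_finite.to_subtype
  q0 := ⟨m.cls [], m.cls_mem_classes h0⟩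
  w0 := (m.f []).get h0
  δ := fun q a =>
    if h : ∃ u : List σ, (m.f u).isSome ∧ (m.f (u ++ [a])).isSome ∧ q.1 = m.cls u then
      some (⟨m.cls (h.choose ++ [a]), m.cls_mem_classes h.choose_spec.2.1⟩,
        ((m.f (h.choose ++ [a])).get h.choose_spec.2.1).drop
          ((m.f h.choose).get h.choose_spec.1).length)
    else none
  δF := fun q =>
    if h : ∃ u : List σ, (m.f u).isSome ∧ q.1 = m.cls u ∧ u ∈ T.rows ∧
        ∃ w, T.val u = TVal.word w then
      some (h.choose_spec.2.2.2.choose.drop ((m.f h.choose).get h.choose_spec.1).length)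
    else none

/-- The state `q_u` of the resulting transducer associated with `u ∈ dom f`. -/
noncomputable def state [Finite σ] (m : MergingMap T) (h0 : (m.f []).isSome)
    {u : List σ} (h : (m.f u).isSome) : (m.resulting h0).Q :=
  ⟨m.cls u, m.cls_mem_classes h⟩

/-- An open completion of a merging map, determined by a choice `g` of added
transitions (which, when used, must only be added at open ends, with output `ε`). -/
noncomputable def openCompletion [Finite σ] (m : MergingMap T) (h0 : (m.f []).isSome)
    (g : (m.resulting h0).Q → σ → Option ((m.resulting h0).Q)) : Transducer σ γ :=
  { m.resulting h0 with
    δ := fun q a =>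
      match (m.resulting h0).δ q a with
      | some x => some x
      | none => (g q a).map fun q' => (q', ([] : List γ)) }

/-- The choice `g` of added transitions only adds transitions at open ends. -/
def ValidOpenChoice [Finite σ] (m : MergingMap T) (h0 : (m.f []).isSome)
    (g : (m.resulting h0).Q → σ → Option ((m.resulting h0).Q)) : Prop :=
  ∀ (q : (m.resulting h0).Q) (a : σ), (g q a).isSome →
    ∃ u : List σ, q.1 = m.cls u ∧ m.OpenEnd u a

/-- The run of `x` in the open completion uses a muted or an open transition. -/
def usesMutedOrOpen [Finite σ] (m : MergingMap T) (h0 : (m.f []).isSome)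
    (g : (m.resulting h0).Q → σ → Option ((m.resulting h0).Q)) (x : List σ) : Prop :=
  ∃ (vp : List σ) (a : σ) (vs : List σ) (q : (m.resulting h0).Q) (w : List γ),
    x = vp ++ a :: vs ∧
    (m.openCompletion h0 g).runFrom (m.openCompletion h0 g).q0 vp = some (q, w) ∧
    ((∃ u, q.1 = m.cls u ∧ m.Muted u a) ∨ (m.resulting h0).δ q a = none)

end MergingMap

/-- The equivalence on `P_T` induced by a transducer: two words are related when
they reach the same state of `M` (or both fail to have a run). -/
def inducedRel {σ γ : Type} (M : Transducer σ γ) (T : ObsTable σ γ) (u v : List σ) : Prop :=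
  u ∈ T.PT ∧ v ∈ T.PT ∧
    (M.runFrom M.q0 u).map Prod.fst = (M.runFrom M.q0 v).map Prod.fst

/-- Helper for the induced partial output function: walk through the word,
appending the transition output only when the step leads into `P_Γ` for
some equivalent word. -/
noncomputable def goF {σ γ : Type} (M : Transducer σ γ) (T : ObsTable σ γ) :
    M.Q → List γ → List σ → Option (List γ)
  | _, acc, [] => some acc
  | q, acc, a :: rest =>
    (M.δ q a).bind fun x =>
      goF M T x.1
        (if ∃ v ∈ T.PT, (M.runFrom M.q0 v).map Prod.fst = some q ∧ v ++ [a] ∈ T.PGamma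
          then acc ++ x.2 else acc) rest

/-- The partial output function induced by a transducer on `P_T`. -/
noncomputable def inducedF {σ γ : Type} (M : Transducer σ γ) (T : ObsTable σ γ)
    (u : List σ) : Option (List γ) :=
  if u ∈ T.PT then goF M T M.q0 M.w0 u else none

/-! `u ≡ u'` says that `u` and `u'` reach the same state of `M`, hence `≡` is a right
congruence, and `f` accumulates the outputs of the unmuted transitions along the run. No
transition on the run of a word of `P_Γ` is muted, so there `f u` is the whole output
`w₀ · out(u)` of the run; compatibility writes `T(u·v) = f u · out_q(v) · δF(q')`, which gives
conditions (2) and (5). Conditions (3), (4) and (6) follow from the one-letter unfolding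
`f (u a) = f u · out(q, a)`, the output being erased exactly when `(q, a)` is muted. -/

namespace Transducer

variable {σ γ : Type} (M : Transducer σ γ)

lemma runFrom_append (q : M.Q) (u v : List σ) :
    M.runFrom q (u ++ v) = (M.runFrom q u).bind fun x =>
      (M.runFrom x.1 v).map fun y => (y.1, x.2 ++ y.2) := by
  induction u generalizing q with
  | nil => simp [runFrom]
  | cons a u ih =>
    simp only [List.cons_append, runFrom]
    cases M.δ q a with
    | none => rfl
    | some x =>
      simp only [Option.bind_some, ih x.1]
      cases M.runFrom x.1 u with
      | none => rfl
      | some y =>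
        simp only [Option.bind_some, Option.map_some]
        cases M.runFrom y.1 v <;> simp

lemma runFrom_append_singleton (q : M.Q) (u : List σ) (a : σ) :
    M.runFrom q (u ++ [a]) = (M.runFrom q u).bind fun x =>
      (M.δ x.1 a).map fun t => (t.1, x.2 ++ t.2) := by
  rw [runFrom_append]
  congr 1
  funext x
  cases hδ : M.δ x.1 a <;> simp [runFrom, hδ]

lemma isSome_runFrom_of_append {q : M.Q} {u v : List σ}
    (h : (M.runFrom q (u ++ v)).isSome) : (M.runFrom q u).isSome := by
  rw [runFrom_append] at h
  cases hu : M.runFrom q u <;> simp_all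

lemma map_fst_runFrom_append_congr {q q' : M.Q} {u u' : List σ}
    (h : (M.runFrom q u).map Prod.fst = (M.runFrom q' u').map Prod.fst) (v : List σ) :
    (M.runFrom q (u ++ v)).map Prod.fst = (M.runFrom q' (u' ++ v)).map Prod.fst := by
  have key : ∀ (p : M.Q) (x : List σ), (M.runFrom p (x ++ v)).map Prod.fst =
      ((M.runFrom p x).map Prod.fst).bind fun r => (M.runFrom r v).map Prod.fst := by
    intro p x
    rw [runFrom_append]
    cases M.runFrom p x <;> simp [Option.map_map, Function.comp_def]
  rw [key, key, h]

lemma sem_eq_some_iff {u : List σ} {w : List γ} :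
    M.sem u = some w ↔ ∃ (x : M.Q × List γ) (fw : List γ), M.runFrom M.q0 u = some x ∧
      M.δF x.1 = some fw ∧ w = M.w0 ++ x.2 ++ fw := by
  unfold sem
  cases M.runFrom M.q0 u with
  | none => simp
  | some x => cases hF : M.δF x.1 <;> simp [hF, eq_comm]

end Transducer

namespace ObsTable

variable {σ γ : Type} (T : ObsTable σ γ)

lemma mem_PT_of_prefix {u x : List σ} (hpre : u <+: x) (hx : x ∈ T.PT) : u ∈ T.PT := by
  obtain ⟨y, hy, hxy⟩ := hx
  exact ⟨y, hy, hpre.trans hxy⟩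

lemma mem_PT_of_mem_rows {u : List σ} (hu : u ∈ T.rows) : u ∈ T.PT :=
  ⟨u, hu, List.prefix_refl u⟩

lemma mem_PGamma_of_prefix {u x : List σ} (hpre : u <+: x) (hx : x ∈ T.PGamma) :
    u ∈ T.PGamma := by
  obtain ⟨hxPT, v, hrow, w, hval⟩ := hx
  obtain ⟨s, rfl⟩ := hpre
  refine ⟨T.mem_PT_of_prefix (List.prefix_append u s) hxPT, s ++ v, ?_, w, ?_⟩
  · simpa only [List.append_assoc] using hrow
  · simpa only [List.append_assoc] using hval

lemma mem_PGamma_of_val_eq_word {u : List σ} {w : List γ} (hu : u ∈ T.rows)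
    (hval : T.val u = TVal.word w) : u ∈ T.PGamma :=
  ⟨T.mem_PT_of_mem_rows hu, [], by simpa using hu, w, by simpa using hval⟩

end ObsTable

section Induced

variable {σ γ : Type} (M : Transducer σ γ) (T : ObsTable σ γ)

/-- The transition of `M` out of `q` reading `a` is not muted, so `f` records its output. -/
def Unmuted (q : M.Q) (a : σ) : Prop :=
  ∃ v ∈ T.PT, (M.runFrom M.q0 v).map Prod.fst = some q ∧ v ++ [a] ∈ T.PGamma

lemma goF_cons (q : M.Q) (acc : List γ) (a : σ) (u : List σ) :
    goF M T q acc (a :: u) = (M.δ q a).bind fun t =>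
      goF M T t.1 (if Unmuted M T q a then acc ++ t.2 else acc) u := rfl

lemma goF_isSome (q : M.Q) (acc : List γ) (u : List σ) :
    (goF M T q acc u).isSome ↔ (M.runFrom q u).isSome := by
  induction u generalizing q acc with
  | nil => simp [goF, Transducer.runFrom]
  | cons a u ih =>
    simp only [goF, Transducer.runFrom]
    cases M.δ q a <;> simp [ih]

lemma goF_append (q : M.Q) (acc : List γ) (u v : List σ) :
    goF M T q acc (u ++ v) = (M.runFrom q u).bind fun x =>
      (goF M T q acc u).bind fun w => goF M T x.1 w v := by
  induction u generalizing q acc with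
  | nil => simp [goF, Transducer.runFrom]
  | cons a u ih =>
    simp only [List.cons_append, goF, Transducer.runFrom]
    cases M.δ q a with
    | none => rfl
    | some x =>
      simp only [Option.bind_some, ih]
      cases M.runFrom x.1 u <;> simp

lemma inducedF_isSome (u : List σ) :
    (inducedF M T u).isSome ↔ u ∈ T.PT ∧ (M.runFrom M.q0 u).isSome := by
  by_cases h : u ∈ T.PT <;> simp [inducedF, h, goF_isSome]

lemma inducedF_append_singleton {u : List σ} {a : σ} {x : M.Q × List γ} {w : List γ}
    (hua : u ++ [a] ∈ T.PT) (hx : M.runFrom M.q0 u = some x) (hw : inducedF M T u = some w) :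
    inducedF M T (u ++ [a]) =
      (M.δ x.1 a).map fun t => w ++ if Unmuted M T x.1 a then t.2 else [] := by
  have hu : u ∈ T.PT := T.mem_PT_of_prefix (List.prefix_append u [a]) hua
  rw [inducedF, if_pos hu] at hw
  rw [inducedF, if_pos hua, goF_append, hx, Option.bind_some, hw, Option.bind_some, goF_cons]
  cases M.δ x.1 a with
  | none => rfl
  | some t => split_ifs <;> simp [goF]

lemma inducedF_eq_of_mem_PGamma {u : List σ} (hu : u ∈ T.PGamma) {x : M.Q × List γ}
    (hx : M.runFrom M.q0 u = some x) : inducedF M T u = some (M.w0 ++ x.2) := by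
  induction u using List.reverseRecOn generalizing x with
  | nil =>
    simp only [Transducer.runFrom, Option.some_inj] at hx
    simp [inducedF, hu.1, goF, ← hx]
  | append_singleton p a ih =>
    have hp : p ∈ T.PGamma := T.mem_PGamma_of_prefix (List.prefix_append p [a]) hu
    rw [Transducer.runFrom_append_singleton] at hx
    simp only [Option.bind_eq_some_iff, Option.map_eq_some_iff] at hx
    obtain ⟨y, hy, t, ht, rfl⟩ := hx
    have hunmuted : Unmuted M T y.1 a := ⟨p, hp.1, by simp [hy], hu⟩
    rw [inducedF_append_singleton M T hu.1 hy (ih hp hy), ht]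
    simp [hunmuted]

lemma exists_of_inducedF_append_singleton_isSome {u : List σ} {a : σ}
    (h : (inducedF M T (u ++ [a])).isSome) :
    u ++ [a] ∈ T.PT ∧ ∃ x w, M.runFrom M.q0 u = some x ∧ inducedF M T u = some w := by
  obtain ⟨hua, hrun⟩ := (inducedF_isSome M T _).1 h
  have hu : u ∈ T.PT := T.mem_PT_of_prefix (List.prefix_append u [a]) hua
  obtain ⟨x, hx⟩ := Option.isSome_iff_exists.mp (M.isSome_runFrom_of_append hrun)
  obtain ⟨w, hw⟩ := Option.isSome_iff_exists.mp ((inducedF_isSome M T u).2 ⟨hu, by simp [hx]⟩)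
  exact ⟨hua, x, w, hx, hw⟩

lemma inducedF_eq_none_of_inducedRel (u v : List σ) (hu : inducedF M T u = none)
    (huv : inducedRel M T u v) : inducedF M T v = none := by
  obtain ⟨huPT, hvPT, hstate⟩ := huv
  have hrun : (M.runFrom M.q0 u).isSome = (M.runFrom M.q0 v).isSome := by
    rw [← Option.isSome_map (f := Prod.fst), hstate, Option.isSome_map]
  rw [← Option.not_isSome_iff_eq_none, inducedF_isSome] at hu ⊢
  rw [hrun] at hu
  exact fun hv => hu ⟨huPT, hv.2⟩

lemma inducedF_prefix_of_append_singleton (u : List σ) (a : σ) (w : List γ)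
    (h : inducedF M T (u ++ [a]) = some w) : ∃ x, inducedF M T u = some x ∧ x <+: w := by
  obtain ⟨hua, x, fu, hx, hfu⟩ := exists_of_inducedF_append_singleton_isSome M T (by rw [h]; rfl)
  rw [inducedF_append_singleton M T hua hx hfu, Option.map_eq_some_iff] at h
  obtain ⟨t, -, rfl⟩ := h
  exact ⟨fu, hfu, List.prefix_append _ _⟩

lemma inducedRel_append {u u' : List σ} (h : inducedRel M T u u') {v : List σ}
    (huv : u ++ v ∈ T.PT) (hu'v : u' ++ v ∈ T.PT) : inducedRel M T (u ++ v) (u' ++ v) :=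
  ⟨huv, hu'v, M.map_fst_runFrom_append_congr h.2.2 v⟩

lemma exists_runFrom_of_inducedRel {u u' : List σ} (h : inducedRel M T u u')
    {x : M.Q × List γ} (hx : M.runFrom M.q0 u = some x) :
    ∃ x', M.runFrom M.q0 u' = some x' ∧ x'.1 = x.1 := by
  have hstate := h.2.2
  rwa [hx, Option.map_some, eq_comm, Option.map_eq_some_iff] at hstate

lemma inducedF_append_singleton_of_inducedRel (u u' : List σ) (a : σ) (wu : List γ)
    (hfu : inducedF M T u = some wu) (h : inducedRel M T u u')
    (hua : u ++ [a] ∈ T.PT) (hu'a : u' ++ [a] ∈ T.PT) :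
    inducedRel M T (u ++ [a]) (u' ++ [a]) ∧
    ∀ wua, inducedF M T (u ++ [a]) = some wua →
      ∃ (wu' x : List γ), inducedF M T u' = some wu' ∧ wua = wu ++ x ∧
        inducedF M T (u' ++ [a]) = some (wu' ++ x) := by
  refine ⟨inducedRel_append M T h hua hu'a, fun wua hfua => ?_⟩
  obtain ⟨x, hx⟩ := Option.isSome_iff_exists.mp
    ((inducedF_isSome M T u).1 (by rw [hfu]; rfl)).2
  obtain ⟨x', hx', hstate⟩ := exists_runFrom_of_inducedRel M T h hx
  obtain ⟨wu', hfu'⟩ := Option.isSome_iff_exists.mp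
    ((inducedF_isSome M T u').2 ⟨h.2.1, by simp [hx']⟩)
  rw [inducedF_append_singleton M T hua hx hfu, Option.map_eq_some_iff] at hfua
  obtain ⟨t, ht, rfl⟩ := hfua
  refine ⟨wu', _, hfu', rfl, ?_⟩
  rw [inducedF_append_singleton M T hu'a hx' hfu', hstate, ht, Option.map_some]

lemma inducedF_append_singleton_of_muted (u : List σ) (a : σ)
    (h : (inducedF M T (u ++ [a])).isSome)
    (hmuted : ¬ ∃ v, inducedRel M T u v ∧ v ++ [a] ∈ T.PGamma) :
    inducedF M T (u ++ [a]) = inducedF M T u := by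
  obtain ⟨hua, x, fu, hx, hfu⟩ := exists_of_inducedF_append_singleton_isSome M T h
  have hu : u ∈ T.PT := T.mem_PT_of_prefix (List.prefix_append u [a]) hua
  have hnot : ¬ Unmuted M T x.1 a := by
    rintro ⟨v, hv, hstate, hva⟩
    exact hmuted ⟨v, ⟨hu, hv, by rw [hx, hstate]; rfl⟩, hva⟩
  rw [inducedF_append_singleton M T hua hx hfu] at h ⊢
  obtain ⟨t, ht⟩ := Option.isSome_iff_exists.mp (Option.isSome_map ▸ h)
  simp [ht, hnot, hfu]

variable {M T}

lemma inducedF_prefix_of_val_eq_word (hM : T.Compatible M) (u v : List σ) (w : List γ)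
    (hu : u ∈ T.PT) (hrow : u ++ v ∈ T.rows) (hval : T.val (u ++ v) = TVal.word w) :
    ∃ x, inducedF M T u = some x ∧ x <+: w := by
  obtain ⟨z, fw, hz, -, rfl⟩ := M.sem_eq_some_iff.1 ((hM _ hrow).1 w hval)
  rw [M.runFrom_append] at hz
  simp only [Option.bind_eq_some_iff, Option.map_eq_some_iff] at hz
  obtain ⟨y, hy, y', -, rfl⟩ := hz
  exact ⟨_, inducedF_eq_of_mem_PGamma M T ⟨hu, v, hrow, _, hval⟩ hy, y'.2 ++ fw, by simp⟩

lemma residual_eq_of_inducedRel (hM : T.Compatible M) (u u' : List σ) (w : List γ)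
    (hu : u ∈ T.rows) (hval : T.val u = TVal.word w) (h : inducedRel M T u u') :
    (u' ∈ T.rows → T.val u' ≠ TVal.bot) ∧
    ∀ w', u' ∈ T.rows → T.val u' = TVal.word w' →
      ∃ (x fu fu' : List γ), inducedF M T u = some fu ∧ inducedF M T u' = some fu' ∧
        w = fu ++ x ∧ w' = fu' ++ x := by
  obtain ⟨x, fw, hx, hfw, rfl⟩ := M.sem_eq_some_iff.1 ((hM _ hu).1 w hval)
  obtain ⟨x', hx', hstate⟩ := exists_runFrom_of_inducedRel M T h hx
  have hsem' : M.sem u' = some (M.w0 ++ x'.2 ++ fw) :=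
    M.sem_eq_some_iff.2 ⟨x', fw, hx', hstate ▸ hfw, rfl⟩
  refine ⟨fun hu' hbot => by simp [(hM _ hu').2 hbot] at hsem', fun w' hu' hval' => ?_⟩
  have hw' : w' = M.w0 ++ x'.2 ++ fw :=
    Option.some_inj.1 (((hM _ hu').1 w' hval').symm.trans hsem')
  exact ⟨fw, _, _, inducedF_eq_of_mem_PGamma M T (T.mem_PGamma_of_val_eq_word hu hval) hx,
    inducedF_eq_of_mem_PGamma M T (T.mem_PGamma_of_val_eq_word hu' hval') hx',
    by simp, by simp [hw']⟩

end Induced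

theorem induced_is_mergingMap_general {σ γ : Type}
    (T : ObsTable σ γ) (M : Transducer σ γ) (hM : T.Compatible M) :
    ∃ m : MergingMap T, m.rel = inducedRel M T ∧ m.f = inducedF M T :=
  ⟨{ rel := inducedRel M T
     f := inducedF M T
     rel_mem := fun _ _ h => ⟨h.1, h.2.1⟩
     rel_refl := fun _ hu => ⟨hu, hu, rfl⟩
     rel_symm := fun ⟨hu, hv, h⟩ => ⟨hv, hu, h.symm⟩
     rel_trans := fun ⟨hu, _, h₁⟩ ⟨_, hw, h₂⟩ => ⟨hu, hw, h₁.trans h₂⟩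
     f_mem := fun u h => ((inducedF_isSome M T u).1 h).1
     cond1 := inducedF_eq_none_of_inducedRel M T
     cond2 := inducedF_prefix_of_val_eq_word hM
     cond3 := inducedF_prefix_of_append_singleton M T
     cond4 := inducedF_append_singleton_of_inducedRel M T
     cond5 := residual_eq_of_inducedRel hM
     cond6 := inducedF_append_singleton_of_muted M T }, rfl, rfl⟩

/-- The pair `(≡, f)` induced on `P_T` by a transducer compatible
with `T` satisfies all six conditions of a merging map, i.e., it is a merging
map on `T`. -/
theorem induced_is_mergingMap {σ γ : Type} [Finite σ] [Finite γ]
    (T : ObsTable σ γ) (M : Transducer σ γ) (hM : T.Compatible M) :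
    ∃ m : MergingMap T, m.rel = inducedRel M T ∧ m.f = inducedF M T :=
  induced_is_mergingMap_general T M hM
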